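/- Assume the SETUP with the f_i of class C², conditions G1–G3, H1–H5, and the distortion condition (D2) sup_i sup_{z∈E_i} |D²f_i(z)|/|f_{i1x}(z)| < C₀, where |D²f_i(z)| is the maximum of the absolute values of all second-order partial derivatives of f_{i1} and f_{i2} at z. Then there exists a constant c > 0, independent of i, such that for every i and all z₁, z₂ ∈ E_i, δ_{z₁}(E_i) ≤ c·δ_{z₂}(E_i), where δ_z(E_i) is the diameter of the intersection of E_i with the horizontal line through z. -/

import Mathlib

/-!
Each horizontal fibre of `E_i` is mapped by `f_{i1}` monotonically onto `[0, 1]`. By the inverse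
function theorem and compactness, boundary points of `E_i` go to boundary points of `S_i`. At a
corner of `E_i`, two independent boundary directions would force a degenerate Jacobian unless the
image lies on a vertical edge of `S_i`. Along a side of `E_i`, an excursion away from that edge
would have to run along the graph of `t_i` or of `b_i` and come back to the same point, which
injectivity forbids. By the mean value theorem the width of the fibre at height `y` is therefore
`1 / |f_{i1x}|` at some point of that fibre. Finally (D2) makes `log |f_{i1x}|` `C₀`-Lipschitz
along horizontal segments and along the left side of `E_i`, so two values of `|f_{i1x}|` on `E_i`
differ at most by the factor `exp ((3 + α) C₀)`.
-/

open MeasureTheory Set Filter Topology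

noncomputable section

/-- The unit square `Q = [0,1] × [0,1]`. -/
def Q2 : Set (ℝ × ℝ) := Set.Icc (0:ℝ) 1 ×ˢ Set.Icc (0:ℝ) 1

/-- The full-height curvilinear rectangle `E_i` with left/right boundaries `l i`, `r i`. -/
def Erect (l r : ℕ → ℝ → ℝ) (i : ℕ) : Set (ℝ × ℝ) :=
  {p : ℝ × ℝ | p.2 ∈ Set.Icc (0:ℝ) 1 ∧ l i p.2 ≤ p.1 ∧ p.1 ≤ r i p.2}

/-- The full-width strip `S_i` with bottom/top boundaries `b i`, `t i`. -/
def Sstrip (b t : ℕ → ℝ → ℝ) (i : ℕ) : Set (ℝ × ℝ) :=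
  {p : ℝ × ℝ | p.1 ∈ Set.Icc (0:ℝ) 1 ∧ b i p.1 ≤ p.2 ∧ p.2 ≤ t i p.1}

/-- The map `f_i = (f_{i1}, f_{i2})` as a map `ℝ² → ℝ²`. -/
def fv (f1 f2 : ℕ → ℝ × ℝ → ℝ) (i : ℕ) (p : ℝ × ℝ) : ℝ × ℝ := (f1 i p, f2 i p)

/-- Partial derivative in the `x`-direction. -/
def Dx (g : ℝ × ℝ → ℝ) (z : ℝ × ℝ) : ℝ := deriv (fun s => g (s, z.2)) z.1

/-- Partial derivative in the `y`-direction. -/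
def Dy (g : ℝ × ℝ → ℝ) (z : ℝ × ℝ) : ℝ := deriv (fun s => g (z.1, s)) z.2

/-- Absolute value of the Jacobian determinant of `f_i`. -/
def Jac (f1 f2 : ℕ → ℝ × ℝ → ℝ) (i : ℕ) (z : ℝ × ℝ) : ℝ :=
  |Dx (f1 i) z * Dy (f2 i) z - Dy (f1 i) z * Dx (f2 i) z|

/-- Maximum of the absolute values of the second-order partial derivatives of `f_i`. -/
def D2max (f1 f2 : ℕ → ℝ × ℝ → ℝ) (i : ℕ) (z : ℝ × ℝ) : ℝ :=
  max (max (max |Dx (Dx (f1 i)) z| |Dy (Dx (f1 i)) z|)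
           (max |Dy (Dy (f1 i)) z| |Dx (Dx (f2 i)) z|))
      (max |Dy (Dx (f2 i)) z| |Dy (Dy (f2 i)) z|)

/-- `δ_{i,max}`: maximal width of a horizontal cross-section of `E_i`. -/
def deltaMax (l r : ℕ → ℝ → ℝ) (i : ℕ) : ℝ :=
  sSup ((fun y => r i y - l i y) '' Set.Icc (0:ℝ) 1)

/-- `δ_{i,min}`: minimal width of a horizontal cross-section of `E_i`. -/
def deltaMin (l r : ℕ → ℝ → ℝ) (i : ℕ) : ℝ :=
  sInf ((fun y => r i y - l i y) '' Set.Icc (0:ℝ) 1)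

/-- `E_{i₀ … i_{n-1}} = E_{i₀} ∩ f_{i₀}⁻¹ (E_{i₁ … i_{n-1}})`. -/
def Efin (l r : ℕ → ℝ → ℝ) (f1 f2 : ℕ → ℝ × ℝ → ℝ) : (ℕ → ℕ) → ℕ → Set (ℝ × ℝ)
  | _, 0 => Set.univ
  | idx, n + 1 =>
      Erect l r (idx 0) ∩ fv f1 f2 (idx 0) ⁻¹' Efin l r f1 f2 (fun k => idx (k + 1)) n

/-- `S_{i₋ₘ … i₋₁} = f_{i₋₁} (S_{i₋ₘ … i₋₂} ∩ E_{i₋₁})`; here `j 0 = i₋₁`, `j 1 = i₋₂`, …. -/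
def Sfin (l r : ℕ → ℝ → ℝ) (f1 f2 : ℕ → ℝ × ℝ → ℝ) : (ℕ → ℕ) → ℕ → Set (ℝ × ℝ)
  | _, 0 => Set.univ
  | j, m + 1 =>
      fv f1 f2 (j 0) '' (Sfin l r f1 f2 (fun k => j (k + 1)) m ∩ Erect l r (j 0))

/-- The topological attractor `Λ`, the union of all the unstable curves. -/
def Attractor (l r : ℕ → ℝ → ℝ) (f1 f2 : ℕ → ℝ × ℝ → ℝ) : Set (ℝ × ℝ) :=
  ⋃ j : ℕ → ℕ, ⋂ m : ℕ, Sfin l r f1 f2 j (m + 1)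

section PartialDerivatives

variable {g : ℝ × ℝ → ℝ} {z : ℝ × ℝ}

theorem DifferentiableAt.hasDerivAt_Dx (hg : DifferentiableAt ℝ g z) :
    HasDerivAt (fun s => g (s, z.2)) (Dx g z) z.1 :=
  (hg.comp z.1 (differentiableAt_id.prodMk (differentiableAt_const _))).hasDerivAt

theorem fderiv_apply_eq_Dx_Dy (hg : DifferentiableAt ℝ g z) (v : ℝ × ℝ) :
    fderiv ℝ g z v = v.1 * Dx g z + v.2 * Dy g z := by
  have hx : Dx g z = fderiv ℝ g z (1, 0) :=
    (hg.hasFDerivAt.comp_hasDerivAt_of_eq z.1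
      ((hasDerivAt_id _).prodMk (hasDerivAt_const _ _)) rfl).deriv
  have hy : Dy g z = fderiv ℝ g z (0, 1) :=
    (hg.hasFDerivAt.comp_hasDerivAt_of_eq z.2
      ((hasDerivAt_const _ _).prodMk (hasDerivAt_id _)) rfl).deriv
  rw [hx, hy, ← smul_eq_mul, ← smul_eq_mul, ← map_smul, ← map_smul, ← map_add]
  congr 1
  ext <;> simp

theorem DifferentiableAt.hasDerivAt_comp_of_hasDerivAt {γ : ℝ → ℝ × ℝ} {v : ℝ × ℝ} {s : ℝ}
    (hg : DifferentiableAt ℝ g (γ s)) (hγ : HasDerivAt γ v s) :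
    HasDerivAt (fun u => g (γ u)) (v.1 * Dx g (γ s) + v.2 * Dy g (γ s)) s := by
  rw [← fderiv_apply_eq_Dx_Dy hg]
  exact hg.hasFDerivAt.comp_hasDerivAt s hγ

theorem ContDiff.contDiff_Dx {n : WithTop ℕ∞} (hg : ContDiff ℝ (n + 1) g) :
    ContDiff ℝ n (Dx g) := by
  have hd : Differentiable ℝ g := hg.differentiable (by simp)
  have : Dx g = fun z => fderiv ℝ g z (1, 0) := funext fun z => by
    simpa using (fderiv_apply_eq_Dx_Dy (hd z) (1, 0)).symm
  rw [this]
  exact (hg.fderiv_right le_rfl).clm_apply contDiff_const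

end PartialDerivatives

theorem HasStrictFDerivAt.exists_isOpen_injOn {𝕜 E : Type*} [NontriviallyNormedField 𝕜]
    [CompleteSpace 𝕜] [NormedAddCommGroup E] [NormedSpace 𝕜 E] [FiniteDimensional 𝕜 E]
    {f : E → E} {f' : E →L[𝕜] E} {a : E} (hf : HasStrictFDerivAt f f' a)
    (hf' : Function.Injective f') : ∃ U, IsOpen U ∧ a ∈ U ∧ InjOn f U := by
  have := FiniteDimensional.complete 𝕜 E
  let e : E ≃L[𝕜] E := (LinearEquiv.ofInjectiveEndo (f' : E →ₗ[𝕜] E) hf').toContinuousLinearEquiv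
  have he : (e : E →L[𝕜] E) = f' := rfl
  rw [← he] at hf
  refine ⟨hf.toOpenPartialHomeomorph f |>.source, (hf.toOpenPartialHomeomorph f).open_source,
    hf.mem_toOpenPartialHomeomorph_source, ?_⟩
  simpa using (hf.toOpenPartialHomeomorph f).injOn

theorem exists_isOpen_injOn_of_Jacobian_ne_zero {g₁ g₂ : ℝ × ℝ → ℝ} {z : ℝ × ℝ}
    (hg : ContDiffAt ℝ 1 (fun w => (g₁ w, g₂ w)) z)
    (hdet : Dx g₁ z * Dy g₂ z - Dy g₁ z * Dx g₂ z ≠ 0) :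
    ∃ U, IsOpen U ∧ z ∈ U ∧ InjOn (fun w => (g₁ w, g₂ w)) U := by
  have h₁ : DifferentiableAt ℝ g₁ z := (contDiffAt_fst.comp z hg).differentiableAt one_ne_zero
  have h₂ : DifferentiableAt ℝ g₂ z := (contDiffAt_snd.comp z hg).differentiableAt one_ne_zero
  have hF := hg.hasStrictFDerivAt one_ne_zero
  rw [(h₁.hasFDerivAt.prodMk h₂.hasFDerivAt).fderiv] at hF
  refine hF.exists_isOpen_injOn ((injective_iff_map_eq_zero _).2 fun v hv => ?_)
  simp only [ContinuousLinearMap.prod_apply, fderiv_apply_eq_Dx_Dy h₁,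
    fderiv_apply_eq_Dx_Dy h₂, Prod.mk_eq_zero] at hv
  have h1 : (Dx g₁ z * Dy g₂ z - Dy g₁ z * Dx g₂ z) * v.1 = 0 := by
    linear_combination Dy g₂ z * hv.1 - Dy g₁ z * hv.2
  have h2 : (Dx g₁ z * Dy g₂ z - Dy g₁ z * Dx g₂ z) * v.2 = 0 := by
    linear_combination Dx g₁ z * hv.2 - Dx g₂ z * hv.1
  exact Prod.ext (by simpa [hdet] using h1) (by simpa [hdet] using h2)

theorem IsCompact.mem_interior_of_mem_interior_image {X Y : Type*} [TopologicalSpace X]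
    [TopologicalSpace Y] [T2Space Y] {F : X → Y} {E U : Set X} {z : X} (hE : IsCompact E)
    (hF : Continuous F) (hinj : InjOn F E) (hz : z ∈ E) (hU : IsOpen U) (hzU : z ∈ U)
    (hUinj : InjOn F U) (h : F z ∈ interior (F '' E)) : z ∈ interior E := by
  have hK : IsClosed (F '' (E \ U)) := ((hE.diff hU).image hF).isClosed
  have hzK : F z ∉ F '' (E \ U) := by
    rintro ⟨e, he, heq⟩
    exact he.2 (hinj he.1 hz heq ▸ hzU)
  refine mem_interior.2 ⟨U ∩ F ⁻¹' ((F '' (E \ U))ᶜ ∩ interior (F '' E)), ?_,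
    hU.inter ((hK.isOpen_compl.inter isOpen_interior).preimage hF), hzU, hzK, h⟩
  rintro w ⟨hwU, hwK, hwE⟩
  obtain ⟨e, he, heq⟩ : F w ∈ F '' E := interior_subset hwE
  have heU : e ∈ U := by_contra fun heU => hwK ⟨e, ⟨he, heU⟩, heq⟩
  rwa [← hUinj heU hwU heq]

theorem exists_pos_add_smul_mem_of_mem_interior {E : Type*} [AddCommGroup E] [Module ℝ E]
    [TopologicalSpace E] [ContinuousAdd E] [ContinuousSMul ℝ E] {s : Set E} {p : E}
    (h : p ∈ interior s) (v : E) : ∃ ε : ℝ, 0 < ε ∧ p + ε • v ∈ s := by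
  have hcont : Continuous fun ε : ℝ => p + ε • v := by fun_prop
  have hev : ∀ᶠ ε in 𝓝[>] (0 : ℝ), p + ε • v ∈ s :=
    nhdsWithin_le_nhds (hcont.tendsto' 0 p (by simp) (mem_interior_iff_mem_nhds.1 h))
  obtain ⟨ε, hε, hεpos⟩ := (hev.and self_mem_nhdsWithin).exists
  exact ⟨ε, hεpos, hε⟩

theorem IsPreconnected.forall_pos_or_forall_neg {s : Set ℝ} (hs : IsPreconnected s)
    {d : ℝ → ℝ} (hd : ContinuousOn d s) (hd0 : ∀ y ∈ s, d y ≠ 0) :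
    (∀ y ∈ s, 0 < d y) ∨ ∀ y ∈ s, d y < 0 := by
  by_contra! ⟨⟨y₁, hy₁, h₁⟩, y₂, hy₂, h₂⟩
  obtain ⟨y, hy, hy0⟩ := hs.intermediate_value hy₁ hy₂ hd ⟨h₁, h₂⟩
  exact hd0 y hy hy0

section Rectangles

variable {l r b t : ℕ → ℝ → ℝ} {i : ℕ}

theorem interior_Erect_subset :
    interior (Erect l r i) ⊆ {p | p.2 ∈ Ioo 0 1 ∧ l i p.2 < p.1 ∧ p.1 < r i p.2} := by
  intro p hp
  have hmem : ∀ v : ℝ × ℝ, ∃ ε : ℝ, 0 < ε ∧ p + ε • v ∈ Erect l r i :=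
    exists_pos_add_smul_mem_of_mem_interior hp
  obtain ⟨ε₁, hε₁, -, -, h₁⟩ := hmem (1, 0)
  obtain ⟨ε₂, hε₂, -, h₂, -⟩ := hmem (-1, 0)
  obtain ⟨ε₃, hε₃, ⟨-, h₃⟩, -⟩ := hmem (0, 1)
  obtain ⟨ε₄, hε₄, ⟨h₄, -⟩, -⟩ := hmem (0, -1)
  simp only [Prod.fst_add, Prod.snd_add, Prod.smul_mk, smul_eq_mul, mul_one, mul_zero,
    add_zero, mul_neg] at h₁ h₂ h₃ h₄
  refine ⟨⟨?_, ?_⟩, ?_, ?_⟩ <;> linarith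

theorem isCompact_Erect (hl : Continuous (l i)) (hr : Continuous (r i))
    (hEQ : Erect l r i ⊆ Q2) : IsCompact (Erect l r i) := by
  refine (isCompact_Icc.prod isCompact_Icc).of_isClosed_subset ?_ hEQ
  exact (isClosed_Icc.preimage continuous_snd).inter
    ((isClosed_le (hl.comp continuous_snd) continuous_fst).inter
      (isClosed_le continuous_fst (hr.comp continuous_snd)))

theorem subset_interior_Sstrip (hb : Continuous (b i)) (ht : Continuous (t i)) :
    {p | p.1 ∈ Ioo 0 1 ∧ b i p.1 < p.2 ∧ p.2 < t i p.1} ⊆ interior (Sstrip b t i) := by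
  refine interior_maximal (fun p hp => ⟨Ioo_subset_Icc_self hp.1, hp.2.1.le, hp.2.2.le⟩) ?_
  exact (isOpen_Ioo.preimage continuous_fst).inter
    ((isOpen_lt (hb.comp continuous_fst) continuous_snd).inter
      (isOpen_lt continuous_snd (ht.comp continuous_fst)))

end Rectangles

theorem fderiv_apply_eq_mul_of_eventuallyEq_comp {g₁ g₂ : ℝ × ℝ → ℝ} {τ : ℝ → ℝ}
    {γ : ℝ → ℝ × ℝ} {v : ℝ × ℝ} {s : ℝ} {S : Set ℝ} (hg₁ : DifferentiableAt ℝ g₁ (γ s))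
    (hg₂ : DifferentiableAt ℝ g₂ (γ s)) (hτ : DifferentiableAt ℝ τ (g₁ (γ s)))
    (hγ : HasDerivAt γ v s) (hS : UniqueDiffWithinAt ℝ S s) (hs : g₂ (γ s) = τ (g₁ (γ s)))
    (hev : ∀ᶠ u in 𝓝[S] s, g₂ (γ u) = τ (g₁ (γ u))) :
    fderiv ℝ g₂ (γ s) v = deriv τ (g₁ (γ s)) * fderiv ℝ g₁ (γ s) v :=
  hS.eq_deriv _ (hg₂.hasFDerivAt.comp_hasDerivAt s hγ).hasDerivWithinAt
    (((hτ.hasDerivAt.comp s (hg₁.hasFDerivAt.comp_hasDerivAt s hγ)).hasDerivWithinAt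
      ).congr_of_eventuallyEq hev hs)

theorem Jacobian_eq_zero_of_eventuallyEq_comp {g₁ g₂ : ℝ × ℝ → ℝ} {τ c : ℝ → ℝ} {y : ℝ}
    {sx sy : Set ℝ} (hg₁ : DifferentiableAt ℝ g₁ (c y, y))
    (hg₂ : DifferentiableAt ℝ g₂ (c y, y)) (hτ : DifferentiableAt ℝ τ (g₁ (c y, y)))
    (hc : DifferentiableAt ℝ c y) (hsx : UniqueDiffWithinAt ℝ sx (c y))
    (hsy : UniqueDiffWithinAt ℝ sy y) (hz : g₂ (c y, y) = τ (g₁ (c y, y)))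
    (hhor : ∀ᶠ x in 𝓝[sx] c y, g₂ (x, y) = τ (g₁ (x, y)))
    (hver : ∀ᶠ y' in 𝓝[sy] y, g₂ (c y', y') = τ (g₁ (c y', y'))) :
    Dx g₁ (c y, y) * Dy g₂ (c y, y) - Dy g₁ (c y, y) * Dx g₂ (c y, y) = 0 := by
  have hor := fderiv_apply_eq_mul_of_eventuallyEq_comp (γ := fun x => (x, y)) hg₁ hg₂ hτ
    ((hasDerivAt_id _).prodMk (hasDerivAt_const _ _)) hsx hz hhor
  have ver := fderiv_apply_eq_mul_of_eventuallyEq_comp (γ := fun y => (c y, y)) hg₁ hg₂ hτ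
    (hc.hasDerivAt.prodMk (hasDerivAt_id _)) hsy hz hver
  simp only [fderiv_apply_eq_Dx_Dy hg₁, fderiv_apply_eq_Dx_Dy hg₂, one_mul, zero_mul,
    add_zero] at hor ver
  linear_combination Dx g₁ (c y, y) * ver - (deriv c y * Dx g₁ (c y, y) + Dy g₁ (c y, y)) * hor

theorem IsClosed.exists_Ioo_disjoint {C : Set ℝ} (hC : IsClosed C) {a b y₀ : ℝ} (ha : a ∈ C)
    (hb : b ∈ C) (hy₀ : y₀ ∈ Icc a b) (hy₀C : y₀ ∉ C) :
    ∃ u v, u < v ∧ u ∈ C ∩ Icc a b ∧ v ∈ C ∩ Icc a b ∧ Disjoint (Ioo u v) C := by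
  have hA : IsCompact (C ∩ Icc a y₀) := isCompact_Icc.inter_left hC
  have hB : IsCompact (C ∩ Icc y₀ b) := isCompact_Icc.inter_left hC
  have hu := hA.sSup_mem ⟨a, ha, le_rfl, hy₀.1⟩
  have hv := hB.sInf_mem ⟨b, hb, hy₀.2, le_rfl⟩
  have huy₀ : sSup (C ∩ Icc a y₀) < y₀ := hu.2.2.lt_of_ne fun h => hy₀C (h ▸ hu.1)
  have hy₀v : y₀ < sInf (C ∩ Icc y₀ b) := hv.2.1.lt_of_ne fun h => hy₀C (h ▸ hv.1)
  refine ⟨_, _, huy₀.trans hy₀v, ⟨hu.1, hu.2.1, hu.2.2.trans hy₀.2⟩,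
    ⟨hv.1, hy₀.1.trans hv.2.1, hv.2.2⟩, Set.disjoint_left.2 fun y hy hyC => ?_⟩
  rcases le_total y y₀ with hyy₀ | hyy₀
  · exact (le_csSup hA.bddAbove ⟨hyC, (hu.2.1.trans hy.1.le), hyy₀⟩).not_gt hy.1
  · exact (csInf_le hB.bddBelow ⟨hyC, hyy₀, hy.2.le.trans hv.2.2⟩).not_gt hy.2

theorem fst_eq_of_injOn_of_mem_graphs {γ : ℝ → ℝ × ℝ} {τ σ : ℝ → ℝ} {a b X : ℝ}
    (hγ : Continuous γ) (hτ : Continuous τ) (hσ : Continuous σ) (hinj : InjOn γ (Icc a b))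
    (ha : (γ a).1 = X) (hb : (γ b).1 = X)
    (hgraph : ∀ y ∈ Icc a b, (γ y).1 ≠ X → (γ y).2 = τ (γ y).1 ∨ (γ y).2 = σ (γ y).1)
    (hτσ : ∀ y ∈ Icc a b, (γ y).1 ≠ X → τ (γ y).1 ≠ σ (γ y).1) :
    ∀ y ∈ Icc a b, (γ y).1 = X := by
  by_contra! ⟨y₀, hy₀, hy₀X⟩
  have hC : IsClosed {y | (γ y).1 = X} := isClosed_eq (continuous_fst.comp hγ) continuous_const
  obtain ⟨u, v, huv, ⟨huX, hu⟩, ⟨hvX, hv⟩, hdisj⟩ := hC.exists_Ioo_disjoint ha hb hy₀ hy₀X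
  have hmid : ∀ y ∈ Ioo u v, y ∈ Icc a b ∧ (γ y).1 ≠ X := fun y hy =>
    ⟨⟨hu.1.trans hy.1.le, hy.2.le.trans hv.2⟩, Set.disjoint_left.1 hdisj hy⟩
  have graph_closed : ∀ ρ : ℝ → ℝ, Continuous ρ → IsClosed {y | (γ y).2 = ρ (γ y).1} :=
    fun ρ hρ => isClosed_eq (continuous_snd.comp hγ) (hρ.comp (continuous_fst.comp hγ))
  -- The arc `γ (Ioo u v)` stays on one graph, so both of its ends are the point `(X, ρ X)`.
  have not_on_graph : ∀ ρ : ℝ → ℝ, Continuous ρ → ¬ Ioo u v ⊆ {y | (γ y).2 = ρ (γ y).1} := by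
    intro ρ hρ hsub
    have hcl := (graph_closed ρ hρ).closure_subset_iff.2 hsub
    rw [closure_Ioo huv.ne] at hcl
    have hu' : (γ u).2 = ρ X := huX ▸ hcl (left_mem_Icc.2 huv.le)
    have hv' : (γ v).2 = ρ X := hvX ▸ hcl (right_mem_Icc.2 huv.le)
    exact huv.ne (hinj hu hv (Prod.ext (huX.trans hvX.symm) (hu'.trans hv'.symm)))
  rcases isPreconnected_iff_subset_of_disjoint_closed.1 isPreconnected_Ioo _ _
      (graph_closed τ hτ) (graph_closed σ hσ) (fun y hy => hgraph y (hmid y hy).1 (hmid y hy).2)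
      (Set.eq_empty_iff_forall_notMem.2 fun y ⟨hy, hyτ, hyσ⟩ =>
        hτσ y (hmid y hy).1 (hmid y hy).2 (hyτ.symm.trans hyσ)) with h | h
  · exact not_on_graph τ hτ h
  · exact not_on_graph σ hσ h

theorem log_abs_sub_log_abs_le {g g' : ℝ → ℝ} {s : Set ℝ} {C : ℝ} (hs : Convex ℝ s)
    (hg : ∀ x ∈ s, HasDerivAt g (g' x) x) (hg0 : ∀ x ∈ s, g x ≠ 0)
    (hbd : ∀ x ∈ s, |g' x| ≤ C * |g x|) {x y : ℝ} (hx : x ∈ s) (hy : y ∈ s) :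
    Real.log |g y| - Real.log |g x| ≤ C * |y - x| := by
  have hlog : ∀ w ∈ s, HasDerivWithinAt (fun w => Real.log (g w)) ((g w)⁻¹ * g' w) s w :=
    fun w hw => ((Real.hasDerivAt_log (hg0 w hw)).comp w (hg w hw)).hasDerivWithinAt
  have hlog' : ∀ w ∈ s, ‖(g w)⁻¹ * g' w‖ ≤ C := fun w hw => by
    rw [Real.norm_eq_abs, abs_mul, abs_inv, inv_mul_le_iff₀ (abs_pos.2 (hg0 w hw)), mul_comm]
    exact hbd w hw
  have := hs.norm_image_sub_le_of_norm_hasDerivWithin_le hlog hlog' hx hy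
  rw [Real.log_abs, Real.log_abs]
  exact (le_abs_self _).trans this

section Distortion

variable {l r : ℕ → ℝ → ℝ} {i : ℕ} {P : ℝ × ℝ → ℝ} {C : ℝ}

theorem log_abs_sub_log_abs_le_of_abs_Dx_le (hC : 0 ≤ C) (hEQ : Erect l r i ⊆ Q2)
    (hP : Differentiable ℝ P) (hP0 : ∀ z ∈ Erect l r i, P z ≠ 0)
    (hDx : ∀ z ∈ Erect l r i, |Dx P z| ≤ C * |P z|) {x₁ x₂ y : ℝ}
    (h₁ : (x₁, y) ∈ Erect l r i) (h₂ : (x₂, y) ∈ Erect l r i) :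
    Real.log |P (x₂, y)| - Real.log |P (x₁, y)| ≤ C := by
  have hsub : ∀ x ∈ uIcc x₁ x₂, (x, y) ∈ Erect l r i := fun x hx =>
    ⟨h₁.1, uIcc_subset_Icc ⟨h₁.2.1, h₁.2.2⟩ ⟨h₂.2.1, h₂.2.2⟩ hx⟩
  have hx₁ := (hEQ h₁).1
  have hx₂ := (hEQ h₂).1
  calc _ ≤ C * |x₂ - x₁| := log_abs_sub_log_abs_le (convex_uIcc x₁ x₂)
          (fun x _ => (hP (x, y)).hasDerivAt_Dx) (fun x hx => hP0 _ (hsub x hx))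
          (fun x hx => hDx _ (hsub x hx)) left_mem_uIcc right_mem_uIcc
    _ ≤ C * 1 := by gcongr; exact abs_sub_le_of_nonneg_of_le hx₂.1 hx₂.2 hx₁.1 hx₁.2
    _ = C := mul_one C

theorem log_abs_sub_log_abs_le_along_left_side {L : ℝ} (hC : 0 ≤ C)
    (hl : Differentiable ℝ (l i)) (hl' : ∀ y, |deriv (l i) y| ≤ L)
    (hlr : ∀ y ∈ Icc (0 : ℝ) 1, l i y ≤ r i y) (hP : Differentiable ℝ P)
    (hP0 : ∀ z ∈ Erect l r i, P z ≠ 0) (hDx : ∀ z ∈ Erect l r i, |Dx P z| ≤ C * |P z|)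
    (hDy : ∀ z ∈ Erect l r i, |Dy P z| ≤ C * |P z|) {y₁ y₂ : ℝ} (h₁ : y₁ ∈ Icc (0 : ℝ) 1)
    (h₂ : y₂ ∈ Icc (0 : ℝ) 1) :
    Real.log |P (l i y₂, y₂)| - Real.log |P (l i y₁, y₁)| ≤ (1 + L) * C := by
  have hL : 0 ≤ L := (abs_nonneg _).trans (hl' 0)
  have hsub : ∀ y ∈ uIcc y₁ y₂, (l i y, y) ∈ Erect l r i := fun y hy =>
    have hy' := uIcc_subset_Icc h₁ h₂ hy
    ⟨hy', le_rfl, hlr y hy'⟩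
  have hbd : ∀ y ∈ uIcc y₁ y₂, |deriv (l i) y * Dx P (l i y, y) + 1 * Dy P (l i y, y)| ≤
      (1 + L) * C * |P (l i y, y)| := fun y hy => by
    have hx := hDx _ (hsub y hy)
    have hy := hDy _ (hsub y hy)
    calc _ ≤ |deriv (l i) y| * |Dx P (l i y, y)| + |Dy P (l i y, y)| := by
          rw [one_mul, ← abs_mul]; exact abs_add_le _ _
      _ ≤ L * (C * |P (l i y, y)|) + C * |P (l i y, y)| := by gcongr; exact hl' y
      _ = (1 + L) * C * |P (l i y, y)| := by ring
  calc _ ≤ (1 + L) * C * |y₂ - y₁| := log_abs_sub_log_abs_le (convex_uIcc y₁ y₂)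
          (fun y _ => (hP _).hasDerivAt_comp_of_hasDerivAt (γ := fun y => (l i y, y))
            ((hl y).hasDerivAt.prodMk (hasDerivAt_id y)))
          (fun y hy => hP0 _ (hsub y hy)) hbd left_mem_uIcc right_mem_uIcc
    _ ≤ (1 + L) * C * 1 := by gcongr; exact abs_sub_le_of_nonneg_of_le h₂.1 h₂.2 h₁.1 h₁.2
    _ = (1 + L) * C := mul_one _

theorem abs_le_exp_mul_abs_of_abs_Dx_Dy_le {L : ℝ} (hC : 0 ≤ C) (hl : Differentiable ℝ (l i))
    (hl' : ∀ y, |deriv (l i) y| ≤ L) (hlr : ∀ y ∈ Icc (0 : ℝ) 1, l i y ≤ r i y)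
    (hEQ : Erect l r i ⊆ Q2) (hP : Differentiable ℝ P) (hP0 : ∀ z ∈ Erect l r i, P z ≠ 0)
    (hDx : ∀ z ∈ Erect l r i, |Dx P z| ≤ C * |P z|)
    (hDy : ∀ z ∈ Erect l r i, |Dy P z| ≤ C * |P z|) {z₁ z₂ : ℝ × ℝ}
    (hz₁ : z₁ ∈ Erect l r i) (hz₂ : z₂ ∈ Erect l r i) :
    |P z₂| ≤ Real.exp ((3 + L) * C) * |P z₁| := by
  -- Go from `z₁` horizontally to the left side, along it to the height of `z₂`, then to `z₂`.
  have h₁ := log_abs_sub_log_abs_le_of_abs_Dx_le hC hEQ hP hP0 hDx hz₁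
    (⟨hz₁.1, le_rfl, hlr _ hz₁.1⟩ : (l i z₁.2, z₁.2) ∈ Erect l r i)
  have h₂ := log_abs_sub_log_abs_le_along_left_side hC hl hl' hlr hP hP0 hDx hDy hz₁.1 hz₂.1
  have h₃ := log_abs_sub_log_abs_le_of_abs_Dx_le hC hEQ hP hP0 hDx
    (⟨hz₂.1, le_rfl, hlr _ hz₂.1⟩ : (l i z₂.2, z₂.2) ∈ Erect l r i) hz₂
  rw [← Real.exp_log (abs_pos.2 (hP0 _ hz₂)), ← Real.exp_log (abs_pos.2 (hP0 _ hz₁)),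
    ← Real.exp_add]
  exact Real.exp_le_exp.2 (by linarith)

end Distortion

theorem abs_Dx_Dx_le_D2max (f1 f2 : ℕ → ℝ × ℝ → ℝ) (i : ℕ) (z : ℝ × ℝ) :
    |Dx (Dx (f1 i)) z| ≤ D2max f1 f2 i z :=
  le_max_of_le_left (le_max_of_le_left (le_max_left _ _))

theorem abs_Dy_Dx_le_D2max (f1 f2 : ℕ → ℝ × ℝ → ℝ) (i : ℕ) (z : ℝ × ℝ) :
    |Dy (Dx (f1 i)) z| ≤ D2max f1 f2 i z :=
  le_max_of_le_left (le_max_of_le_left (le_max_right _ _))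

structure IsFullBranch (l r b t : ℕ → ℝ → ℝ) (f1 f2 : ℕ → ℝ × ℝ → ℝ) (i : ℕ) : Prop where
  contDiff_l : ContDiff ℝ 1 (l i)
  contDiff_r : ContDiff ℝ 1 (r i)
  contDiff_b : ContDiff ℝ 1 (b i)
  contDiff_t : ContDiff ℝ 1 (t i)
  l_lt_r : ∀ y ∈ Icc (0 : ℝ) 1, l i y < r i y
  b_lt_t : ∀ x ∈ Icc (0 : ℝ) 1, b i x < t i x
  Erect_subset_Q2 : Erect l r i ⊆ Q2
  contDiff_fv : ContDiff ℝ 1 (fv f1 f2 i)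
  injOn : InjOn (fv f1 f2 i) (Erect l r i)
  image_eq : fv f1 f2 i '' Erect l r i = Sstrip b t i
  Jac_pos : ∀ z ∈ Erect l r i, 0 < Jac f1 f2 i z

namespace IsFullBranch

variable {l r b t : ℕ → ℝ → ℝ} {f1 f2 : ℕ → ℝ × ℝ → ℝ} {i : ℕ} {z : ℝ × ℝ}

theorem differentiable_f1 (h : IsFullBranch l r b t f1 f2 i) : Differentiable ℝ (f1 i) :=
  (contDiff_fst.comp h.contDiff_fv).differentiable one_ne_zero

theorem differentiable_f2 (h : IsFullBranch l r b t f1 f2 i) : Differentiable ℝ (f2 i) :=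
  (contDiff_snd.comp h.contDiff_fv).differentiable one_ne_zero

theorem fv_mem_Sstrip (h : IsFullBranch l r b t f1 f2 i) (hz : z ∈ Erect l r i) :
    fv f1 f2 i z ∈ Sstrip b t i :=
  h.image_eq ▸ mem_image_of_mem _ hz

theorem fv_notMem_interior_Sstrip (h : IsFullBranch l r b t f1 f2 i) (hz : z ∈ Erect l r i)
    (hzE : z ∉ interior (Erect l r i)) : fv f1 f2 i z ∉ interior (Sstrip b t i) := by
  intro hFz
  obtain ⟨U, hU, hzU, hUinj⟩ := exists_isOpen_injOn_of_Jacobian_ne_zero (g₁ := f1 i) (g₂ := f2 i)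
    h.contDiff_fv.contDiffAt (abs_pos.1 (h.Jac_pos z hz))
  exact hzE ((isCompact_Erect h.contDiff_l.continuous h.contDiff_r.continuous h.Erect_subset_Q2
    ).mem_interior_of_mem_interior_image h.contDiff_fv.continuous h.injOn hz hU hzU hUinj
      (h.image_eq ▸ hFz))

theorem mem_graph_of_notMem_interior (h : IsFullBranch l r b t f1 f2 i) (hz : z ∈ Erect l r i)
    (hzE : z ∉ interior (Erect l r i)) (h1 : f1 i z ∈ Ioo 0 1) :
    f2 i z = t i (f1 i z) ∨ f2 i z = b i (f1 i z) := by
  obtain ⟨-, hb, ht⟩ := h.fv_mem_Sstrip hz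
  by_contra! hne
  exact h.fv_notMem_interior_Sstrip hz hzE <|
    subset_interior_Sstrip h.contDiff_b.continuous h.contDiff_t.continuous
      ⟨h1, hb.lt_of_ne (Ne.symm hne.2), ht.lt_of_ne hne.1⟩

theorem exists_eventually_eq_graph (h : IsFullBranch l r b t f1 f2 i) (hz : z ∈ Erect l r i)
    (hzE : z ∉ interior (Erect l r i)) (h1 : f1 i z ∈ Ioo 0 1) :
    ∃ τ ∈ ({t i, b i} : Set (ℝ → ℝ)), ∀ᶠ w in 𝓝 z,
      w ∈ Erect l r i → w ∉ interior (Erect l r i) → f2 i w = τ (f1 i w) := by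
  -- Near `z` the boundary of `E_i` cannot jump to the other graph: it stays off it by continuity.
  have stay : ∀ τ σ : ℝ → ℝ, Continuous σ → f2 i z ≠ σ (f1 i z) →
      (∀ w ∈ Erect l r i, w ∉ interior (Erect l r i) → f1 i w ∈ Ioo 0 1 →
        f2 i w = τ (f1 i w) ∨ f2 i w = σ (f1 i w)) →
      ∀ᶠ w in 𝓝 z, w ∈ Erect l r i → w ∉ interior (Erect l r i) → f2 i w = τ (f1 i w) := by
    intro τ σ hσ hzσ hgraph
    have hopen : IsOpen {w | f1 i w ∈ Ioo 0 1 ∧ f2 i w ≠ σ (f1 i w)} :=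
      (isOpen_Ioo.preimage h.differentiable_f1.continuous).inter
        (isOpen_ne_fun h.differentiable_f2.continuous (hσ.comp h.differentiable_f1.continuous))
    filter_upwards [hopen.mem_nhds ⟨h1, hzσ⟩] with w hw hwE hwint
    exact (hgraph w hwE hwint hw.1).resolve_right hw.2
  have hbt := h.b_lt_t _ (Ioo_subset_Icc_self h1)
  rcases h.mem_graph_of_notMem_interior hz hzE h1 with hzt | hzb
  · exact ⟨t i, .inl rfl, stay _ _ h.contDiff_b.continuous (hzt ▸ hbt.ne')
      fun w hw hwint hw1 => h.mem_graph_of_notMem_interior hw hwint hw1⟩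
  · exact ⟨b i, .inr rfl, stay _ _ h.contDiff_t.continuous (hzb ▸ hbt.ne)
      fun w hw hwint hw1 => (h.mem_graph_of_notMem_interior hw hwint hw1).symm⟩

theorem f1_notMem_Ioo_of_corner (h : IsFullBranch l r b t f1 f2 i) {c : ℝ → ℝ}
    (hc : Differentiable ℝ c) (hcE : ∀ y ∈ Icc (0 : ℝ) 1, c y ∈ Icc (l i y) (r i y))
    (hcbd : ∀ y ∈ Icc (0 : ℝ) 1, (c y, y) ∉ interior (Erect l r i)) {y : ℝ}
    (hy : y = 0 ∨ y = 1) : f1 i (c y, y) ∉ Ioo 0 1 := by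
  intro h1
  have hyI : y ∈ Icc (0 : ℝ) 1 := by rcases hy with rfl | rfl <;> simp
  have hz : (c y, y) ∈ Erect l r i := ⟨hyI, hcE y hyI⟩
  obtain ⟨τ, hτ, hev⟩ := h.exists_eventually_eq_graph hz (hcbd y hyI) h1
  have hτd : Differentiable ℝ τ := by
    rcases hτ with rfl | rfl
    exacts [h.contDiff_t.differentiable one_ne_zero, h.contDiff_b.differentiable one_ne_zero]
  -- At a corner both the horizontal edge and the side curve lie in the boundary of `E_i`.
  have hhor : ∀ᶠ x in 𝓝[Icc (l i y) (r i y)] c y, f2 i (x, y) = τ (f1 i (x, y)) := by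
    have hcont : Continuous fun x : ℝ => (x, y) := by fun_prop
    filter_upwards [self_mem_nhdsWithin,
      nhdsWithin_le_nhds (hcont.tendsto' (c y) (c y, y) rfl |>.eventually hev)] with x hx hxev
    refine hxev ⟨hyI, hx⟩ fun hint => ?_
    have := (interior_Erect_subset hint).1
    rcases hy with rfl | rfl <;> simp at this
  have hver : ∀ᶠ y' in 𝓝[Icc 0 1] y, f2 i (c y', y') = τ (f1 i (c y', y')) := by
    have hcont : Continuous fun y' => (c y', y') := hc.continuous.prodMk continuous_id
    filter_upwards [self_mem_nhdsWithin,
      nhdsWithin_le_nhds (hcont.tendsto' y (c y, y) rfl |>.eventually hev)] with y' hy' hyev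
    exact hyev ⟨hy', hcE y' hy'⟩ (hcbd y' hy')
  refine (h.Jac_pos _ hz).ne' ?_
  rw [Jac, Jacobian_eq_zero_of_eventuallyEq_comp (h.differentiable_f1 _)
    (h.differentiable_f2 _) (hτd _) (hc y) (uniqueDiffOn_Icc (h.l_lt_r y hyI) _ (hcE y hyI))
    (uniqueDiffOn_Icc zero_lt_one y hyI) (hev.self_of_nhds hz (hcbd y hyI)) hhor hver, abs_zero]

theorem f1_eq_of_boundary_curve (h : IsFullBranch l r b t f1 f2 i) {c : ℝ → ℝ}
    (hc : Differentiable ℝ c) (hcE : ∀ y ∈ Icc (0 : ℝ) 1, c y ∈ Icc (l i y) (r i y))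
    (hcbd : ∀ y ∈ Icc (0 : ℝ) 1, (c y, y) ∉ interior (Erect l r i)) {X : ℝ}
    (hX : ∀ y ∈ Icc (0 : ℝ) 1, f1 i (c y, y) ≠ X → f1 i (c y, y) ∈ Ioo 0 1) :
    ∀ y ∈ Icc (0 : ℝ) 1, f1 i (c y, y) = X := by
  have hmem : ∀ y ∈ Icc (0 : ℝ) 1, (c y, y) ∈ Erect l r i := fun y hy => ⟨hy, hcE y hy⟩
  have hcorner : ∀ y, y = 0 ∨ y = 1 → f1 i (c y, y) = X := fun y hy => by
    by_contra hne
    have hyI : y ∈ Icc (0 : ℝ) 1 := by rcases hy with rfl | rfl <;> simp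
    exact h.f1_notMem_Ioo_of_corner hc hcE hcbd hy (hX y hyI hne)
  exact fst_eq_of_injOn_of_mem_graphs (γ := fun y => fv f1 f2 i (c y, y))
    (h.contDiff_fv.continuous.comp (hc.continuous.prodMk continuous_id)) h.contDiff_t.continuous
    h.contDiff_b.continuous
    (fun y hy y' hy' heq => congrArg Prod.snd (h.injOn (hmem y hy) (hmem y' hy') heq))
    (hcorner 0 (.inl rfl)) (hcorner 1 (.inr rfl))
    (fun y hy hne => h.mem_graph_of_notMem_interior (hmem y hy) (hcbd y hy) (hX y hy hne))
    (fun y hy hne => (h.b_lt_t _ (Ioo_subset_Icc_self (hX y hy hne))).ne')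

theorem f1_right_ne_f1_left (h : IsFullBranch l r b t f1 f2 i)
    (hP : ∀ z ∈ Erect l r i, Dx (f1 i) z ≠ 0) {y : ℝ} (hy : y ∈ Icc (0 : ℝ) 1) :
    f1 i (r i y, y) ≠ f1 i (l i y, y) := by
  intro heq
  obtain ⟨ξ, hξ, hξ0⟩ := exists_hasDerivAt_eq_zero (h.l_lt_r y hy)
    (h.differentiable_f1.continuous.comp (continuous_id.prodMk continuous_const)).continuousOn
    heq.symm fun x _ => (h.differentiable_f1 (x, y)).hasDerivAt_Dx
  exact hP (ξ, y) ⟨hy, hξ.1.le, hξ.2.le⟩ hξ0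

theorem abs_f1_right_sub_f1_left (h : IsFullBranch l r b t f1 f2 i)
    (hP : ∀ z ∈ Erect l r i, Dx (f1 i) z ≠ 0) {y : ℝ} (hy : y ∈ Icc (0 : ℝ) 1) :
    |f1 i (r i y, y) - f1 i (l i y, y)| = 1 := by
  have hlE : ∀ y ∈ Icc (0 : ℝ) 1, (l i y, y) ∈ Erect l r i :=
    fun y hy => ⟨hy, le_rfl, (h.l_lt_r y hy).le⟩
  have hrE : ∀ y ∈ Icc (0 : ℝ) 1, (r i y, y) ∈ Erect l r i :=
    fun y hy => ⟨hy, (h.l_lt_r y hy).le, le_rfl⟩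
  have on_r := fun X : ℝ => h.f1_eq_of_boundary_curve (X := X)
    (h.contDiff_r.differentiable one_ne_zero)
    (fun y hy => hrE y hy |>.2) fun y _ hint => (interior_Erect_subset hint).2.2.false
  have on_l := fun X : ℝ => h.f1_eq_of_boundary_curve (X := X)
    (h.contDiff_l.differentiable one_ne_zero)
    (fun y hy => hlE y hy |>.2) fun y _ hint => (interior_Erect_subset hint).2.1.false
  have hcont : Continuous fun y => f1 i (r i y, y) - f1 i (l i y, y) :=
    (h.differentiable_f1.continuous.comp (h.contDiff_r.continuous.prodMk continuous_id)).sub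
      (h.differentiable_f1.continuous.comp (h.contDiff_l.continuous.prodMk continuous_id))
  -- The side of `E_i` on which `f1 i` is larger goes to `x = 1`, the other one to `x = 0`.
  rcases isPreconnected_Icc.forall_pos_or_forall_neg hcont.continuousOn
    fun y hy => sub_ne_zero.2 (h.f1_right_ne_f1_left hP hy) with hpos | hneg
  · have h1 := on_r 1 fun y hy hne =>
      ⟨(h.fv_mem_Sstrip (hlE y hy)).1.1.trans_lt (sub_pos.1 (hpos y hy)),
        (h.fv_mem_Sstrip (hrE y hy)).1.2.lt_of_ne hne⟩
    have h0 := on_l 0 fun y hy hne =>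
      ⟨(h.fv_mem_Sstrip (hlE y hy)).1.1.lt_of_ne' hne,
        (sub_pos.1 (hpos y hy)).trans_le (h.fv_mem_Sstrip (hrE y hy)).1.2⟩
    rw [h1 y hy, h0 y hy]; norm_num
  · have h0 := on_r 0 fun y hy hne =>
      ⟨(h.fv_mem_Sstrip (hrE y hy)).1.1.lt_of_ne' hne,
        (sub_neg.1 (hneg y hy)).trans_le (h.fv_mem_Sstrip (hlE y hy)).1.2⟩
    have h1 := on_l 1 fun y hy hne =>
      ⟨(h.fv_mem_Sstrip (hrE y hy)).1.1.trans_lt (sub_neg.1 (hneg y hy)),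
        (h.fv_mem_Sstrip (hlE y hy)).1.2.lt_of_ne hne⟩
    rw [h1 y hy, h0 y hy]; norm_num

theorem exists_abs_Dx_mul_width_eq_one (h : IsFullBranch l r b t f1 f2 i)
    (hP : ∀ z ∈ Erect l r i, Dx (f1 i) z ≠ 0) {y : ℝ} (hy : y ∈ Icc (0 : ℝ) 1) :
    ∃ ξ, (ξ, y) ∈ Erect l r i ∧ |Dx (f1 i) (ξ, y)| * (r i y - l i y) = 1 := by
  have hlr := h.l_lt_r y hy
  obtain ⟨ξ, hξ, hslope⟩ := exists_hasDerivAt_eq_slope (fun x => f1 i (x, y)) _ hlr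
    (h.differentiable_f1.continuous.comp (continuous_id.prodMk continuous_const)).continuousOn
    fun x _ => (h.differentiable_f1 (x, y)).hasDerivAt_Dx
  refine ⟨ξ, ⟨hy, hξ.1.le, hξ.2.le⟩, ?_⟩
  rw [hslope, abs_div, abs_of_pos (sub_pos.2 hlr), h.abs_f1_right_sub_f1_left hP hy,
    one_div_mul_cancel (sub_pos.2 hlr).ne']

end IsFullBranch

theorem bounded_width_ratio_general
    (α K₀ : ℝ) (hα0 : 0 < α) (hK : 1 < K₀)
    (l r b t : ℕ → ℝ → ℝ) (f1 f2 : ℕ → ℝ × ℝ → ℝ)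
    (hl : ∀ i, ContDiff ℝ 1 (l i)) (hr : ∀ i, ContDiff ℝ 1 (r i))
    (hb : ∀ i, ContDiff ℝ 1 (b i)) (ht : ∀ i, ContDiff ℝ 1 (t i))
    (hl' : ∀ i y, |deriv (l i) y| ≤ α)
    (hlr : ∀ i, ∀ y ∈ Set.Icc (0:ℝ) 1, l i y < r i y)
    (hbt : ∀ i, ∀ x ∈ Set.Icc (0:ℝ) 1, b i x < t i x)
    (hEQ : ∀ i, Erect l r i ⊆ Q2)
    (hfsm : ∀ i, ContDiff ℝ 2 (fv f1 f2 i))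
    (hfinj : ∀ i, Set.InjOn (fv f1 f2 i) (Erect l r i))
    (hfim : ∀ i, fv f1 f2 i '' Erect l r i = Sstrip b t i)
    (hJpos : ∀ i, ∀ z ∈ Erect l r i, 0 < Jac f1 f2 i z)
    (hH2 : ∀ i, ∀ z ∈ Erect l r i, K₀ ≤ |Dx (f1 i) z| - α * |Dy (f1 i) z|)
    (C₀ : ℝ) (hC₀ : 0 < C₀)
    (hD2 : ∀ i, ∀ z ∈ Erect l r i, D2max f1 f2 i z ≤ C₀ * |Dx (f1 i) z|)
    :
    ∃ c : ℝ, 0 < c ∧ ∀ i : ℕ, ∀ z₁ ∈ Erect l r i, ∀ z₂ ∈ Erect l r i,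
      r i z₁.2 - l i z₁.2 ≤ c * (r i z₂.2 - l i z₂.2) := by
  refine ⟨Real.exp ((3 + α) * C₀), Real.exp_pos _, fun i z₁ hz₁ z₂ hz₂ => ?_⟩
  have hbranch : IsFullBranch l r b t f1 f2 i := ⟨hl i, hr i, hb i, ht i, hlr i, hbt i, hEQ i,
    (hfsm i).of_le one_le_two, hfinj i, hfim i, hJpos i⟩
  have hP : ∀ z ∈ Erect l r i, Dx (f1 i) z ≠ 0 := fun z hz h0 => by
    have := hH2 i z hz
    rw [h0, abs_zero] at this
    linarith [mul_nonneg hα0.le (abs_nonneg (Dy (f1 i) z))]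
  have hf1 : ContDiff ℝ (1 + 1) (f1 i) := contDiff_fst.comp (hfsm i)
  obtain ⟨ξ₁, hξ₁, hw₁⟩ := hbranch.exists_abs_Dx_mul_width_eq_one hP hz₁.1
  obtain ⟨ξ₂, hξ₂, hw₂⟩ := hbranch.exists_abs_Dx_mul_width_eq_one hP hz₂.1
  have hdist := abs_le_exp_mul_abs_of_abs_Dx_Dy_le hC₀.le ((hl i).differentiable one_ne_zero)
    (hl' i) (fun y hy => (hlr i y hy).le) (hEQ i) (hf1.contDiff_Dx.differentiable one_ne_zero)
    hP (fun z hz => (abs_Dx_Dx_le_D2max f1 f2 i z).trans (hD2 i z hz))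
    (fun z hz => (abs_Dy_Dx_le_D2max f1 f2 i z).trans (hD2 i z hz)) hξ₁ hξ₂
  set w₁ := r i z₁.2 - l i z₁.2
  set w₂ := r i z₂.2 - l i z₂.2
  have hw₁0 : 0 < w₁ := sub_pos.2 (hlr i _ hz₁.1)
  have hw₂0 : 0 < w₂ := sub_pos.2 (hlr i _ hz₂.1)
  calc w₁ = |Dx (f1 i) (ξ₂, z₂.2)| * w₂ * w₁ := by rw [hw₂, one_mul]
    _ ≤ Real.exp ((3 + α) * C₀) * |Dx (f1 i) (ξ₁, z₁.2)| * w₂ * w₁ := by gcongr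
    _ = Real.exp ((3 + α) * C₀) * w₂ := by linear_combination Real.exp ((3 + α) * C₀) * w₂ * hw₁

/-- Corollary 5.4: under H1–H5 and D2, the widths of the horizontal cross-sections of
each `E_i` have uniformly bounded ratios, with a constant independent of `i`. -/
theorem bounded_width_ratio
    (α K₀ : ℝ) (hα0 : 0 < α) (hα1 : α < 1) (hK : 1 < K₀)
    (l r b t : ℕ → ℝ → ℝ) (f1 f2 : ℕ → ℝ × ℝ → ℝ)
    (hl : ∀ i, ContDiff ℝ 1 (l i)) (hr : ∀ i, ContDiff ℝ 1 (r i))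
    (hb : ∀ i, ContDiff ℝ 1 (b i)) (ht : ∀ i, ContDiff ℝ 1 (t i))
    (hl' : ∀ i y, |deriv (l i) y| ≤ α) (hr' : ∀ i y, |deriv (r i) y| ≤ α)
    (hb' : ∀ i x, |deriv (b i) x| ≤ α) (ht' : ∀ i x, |deriv (t i) x| ≤ α)
    (hlr : ∀ i, ∀ y ∈ Set.Icc (0:ℝ) 1, l i y < r i y)
    (hbt : ∀ i, ∀ x ∈ Set.Icc (0:ℝ) 1, b i x < t i x)
    (hEQ : ∀ i, Erect l r i ⊆ Q2) (hSQ : ∀ i, Sstrip b t i ⊆ Q2)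
    (hfsm : ∀ i, ContDiff ℝ 2 (fv f1 f2 i))
    (hfinj : ∀ i, Set.InjOn (fv f1 f2 i) (Erect l r i))
    (hfim : ∀ i, fv f1 f2 i '' Erect l r i = Sstrip b t i)
    (hJpos : ∀ i, ∀ z ∈ Erect l r i, 0 < Jac f1 f2 i z)
    (hG1E : ∀ i j, i ≠ j → interior (Erect l r i) ∩ interior (Erect l r j) = ∅)
    (hG1S : ∀ i j, i ≠ j → interior (Sstrip b t i) ∩ interior (Sstrip b t j) = ∅)
    (hG2 : volume (Q2 \ ⋃ i, interior (Erect l r i)) = 0)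
    (hG3 : Summable (fun i => deltaMax l r i * Real.log (1 / deltaMin l r i)))
    (hH1 : ∀ i, ∀ z ∈ Erect l r i,
      |Dx (f2 i) z| + α * |Dy (f2 i) z| + α ^ 2 * |Dy (f1 i) z| ≤ α * |Dx (f1 i) z|)
    (hH2 : ∀ i, ∀ z ∈ Erect l r i, K₀ ≤ |Dx (f1 i) z| - α * |Dy (f1 i) z|)
    (hH3 : ∀ i, ∀ z ∈ Erect l r i,
      |Dy (f1 i) z| + α * |Dy (f2 i) z| + α ^ 2 * |Dx (f2 i) z| ≤ α * |Dx (f1 i) z|)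
    (hH4 : ∀ i, ∀ z ∈ Erect l r i, Jac f1 f2 i z * K₀ ≤ |Dx (f1 i) z| - α * |Dx (f2 i) z|)
    (hH5 : 1 / K₀ ^ 2 + α ^ 2 < 1)
    (C₀ : ℝ) (hC₀ : 0 < C₀)
    (hD2 : ∀ i, ∀ z ∈ Erect l r i, D2max f1 f2 i z ≤ C₀ * |Dx (f1 i) z|)
    :
    ∃ c : ℝ, 0 < c ∧ ∀ i : ℕ, ∀ z₁ ∈ Erect l r i, ∀ z₂ ∈ Erect l r i,
      r i z₁.2 - l i z₁.2 ≤ c * (r i z₂.2 - l i z₂.2) :=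
  bounded_width_ratio_general α K₀ hα0 hK l r b t f1 f2 hl hr hb ht hl' hlr hbt hEQ hfsm hfinj hfim
    hJpos hH2 C₀ hC₀ hD2
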